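/- For every x ∈ [0, 1/2) and every y ∈ ℝ with Φ(y) = 1/2 + x, one has φ(0) − φ(y) ≥ √(π/2)·x². -/

import Mathlib

open Real

/-- The standard normal density `φ(u) = (2π)^{-1/2} exp(-u²/2)`. -/
noncomputable def stdGaussianPDF (u : ℝ) : ℝ :=
  (Real.sqrt (2 * Real.pi))⁻¹ * Real.exp (-u ^ 2 / 2)

/-- The standard normal cumulative distribution function. -/
noncomputable def stdGaussianCDF (x : ℝ) : ℝ :=
  ∫ t in Set.Iic x, stdGaussianPDF t

open MeasureTheory Set

lemma stdGaussianPDF_eq (u : ℝ) :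
    stdGaussianPDF u = (Real.sqrt (2 * Real.pi))⁻¹ * Real.exp (-(1/2) * u ^ 2) := by
  unfold stdGaussianPDF; ring_nf

lemma sqrt_two_pi_pos : 0 < Real.sqrt (2 * Real.pi) :=
  Real.sqrt_pos.2 (by positivity)

lemma stdGaussianPDF_pos (u : ℝ) : 0 < stdGaussianPDF u := by
  unfold stdGaussianPDF; positivity

lemma stdGaussianPDF_le (u : ℝ) : stdGaussianPDF u ≤ stdGaussianPDF 0 := by
  unfold stdGaussianPDF
  have h : Real.exp (-u ^ 2 / 2) ≤ Real.exp (-(0:ℝ) ^ 2 / 2) := by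
    apply Real.exp_le_exp.2
    nlinarith [sq_nonneg u]
  exact mul_le_mul_of_nonneg_left h (le_of_lt (inv_pos.2 sqrt_two_pi_pos))

lemma stdGaussianPDF_continuous : Continuous stdGaussianPDF := by
  unfold stdGaussianPDF
  continuity

lemma stdGaussianPDF_integrable : Integrable stdGaussianPDF := by
  rw [show stdGaussianPDF = fun u => (Real.sqrt (2 * Real.pi))⁻¹ *
      Real.exp (-(1/2) * u ^ 2) from funext stdGaussianPDF_eq]
  exact (integrable_exp_neg_mul_sq (by norm_num : (0:ℝ) < 1/2)).const_mul _

lemma stdGaussianPDF_total : ∫ u : ℝ, stdGaussianPDF u = 1 := by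
  simp_rw [stdGaussianPDF_eq]
  rw [integral_const_mul, integral_gaussian]
  rw [show Real.pi / (1/2) = 2 * Real.pi by ring]
  exact inv_mul_cancel₀ (ne_of_gt sqrt_two_pi_pos)

lemma stdGaussianCDF_zero : stdGaussianCDF 0 = 1 / 2 := by
  have hsymm : (∫ t in Iic (0:ℝ), stdGaussianPDF t) = ∫ t in Ioi (0:ℝ), stdGaussianPDF t := by
    rw [← neg_zero, ← integral_comp_neg_Iic, neg_zero]
    congr 1; ext t; unfold stdGaussianPDF; rw [neg_sq]
  have hadd := intervalIntegral.integral_Iic_add_Ioi (b := (0:ℝ)) (μ := volume)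
    stdGaussianPDF_integrable.integrableOn stdGaussianPDF_integrable.integrableOn
  rw [stdGaussianPDF_total] at hadd
  unfold stdGaussianCDF
  linarith [hsymm, hadd]

lemma stdGaussianCDF_sub (y : ℝ) :
    stdGaussianCDF y - stdGaussianCDF 0 = ∫ t in (0:ℝ)..y, stdGaussianPDF t :=
  intervalIntegral.integral_Iic_sub_Iic stdGaussianPDF_integrable.integrableOn
    stdGaussianPDF_integrable.integrableOn

lemma stdGaussianPDF_hasDerivAt (y : ℝ) :
    HasDerivAt stdGaussianPDF (-y * stdGaussianPDF y) y := by
  have h1 : HasDerivAt (fun u : ℝ => -u ^ 2 / 2) (-y) y := by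
    have := ((hasDerivAt_pow 2 y).neg).div_const 2
    simpa using this.congr_deriv (by push_cast; ring)
  have h2 := (h1.exp).const_mul (Real.sqrt (2 * Real.pi))⁻¹
  convert h2 using 1
  · rfl
  · rfl
  · rfl
  unfold stdGaussianPDF; ring

lemma key_ineq (y : ℝ) (hy : 0 ≤ y) :
    Real.sqrt (Real.pi / 2) * (∫ t in (0:ℝ)..y, stdGaussianPDF t) ^ 2
      ≤ stdGaussianPDF 0 - stdGaussianPDF y := by
  set G : ℝ → ℝ := fun u => ∫ t in (0:ℝ)..u, stdGaussianPDF t with hG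
  set F : ℝ → ℝ := fun u => stdGaussianPDF 0 - stdGaussianPDF u
      - Real.sqrt (Real.pi / 2) * G u ^ 2 with hF
  have hGd : ∀ u : ℝ, HasDerivAt G (stdGaussianPDF u) u := fun u =>
    intervalIntegral.integral_hasDerivAt_right
      stdGaussianPDF_integrable.intervalIntegrable
      (stdGaussianPDF_continuous.stronglyMeasurable.stronglyMeasurableAtFilter)
      stdGaussianPDF_continuous.continuousAt
  have hFd : ∀ u : ℝ, HasDerivAt F
      (-(-u * stdGaussianPDF u) - Real.sqrt (Real.pi / 2) *
        (2 * G u ^ 1 * stdGaussianPDF u)) u := by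
    intro u
    exact (((stdGaussianPDF_hasDerivAt u).const_sub _).sub
      (((hGd u).pow 2).const_mul _))
  -- G u ≤ u * stdGaussianPDF 0 for u ≥ 0
  have hGle : ∀ u : ℝ, 0 ≤ u → G u ≤ u * stdGaussianPDF 0 := by
    intro u hu
    have : G u ≤ ∫ _ in (0:ℝ)..u, stdGaussianPDF 0 := by
      apply intervalIntegral.integral_mono_on hu
        stdGaussianPDF_integrable.intervalIntegrable
        intervalIntegrable_const
      intro t _; exact stdGaussianPDF_le t
    simpa using this
  have hG0 : ∀ u : ℝ, 0 ≤ u → 0 ≤ G u := by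
    intro u hu
    apply intervalIntegral.integral_nonneg hu
    intro t _; exact (stdGaussianPDF_pos t).le
  have h0 : stdGaussianPDF 0 = (Real.sqrt (2 * Real.pi))⁻¹ := by
    unfold stdGaussianPDF; norm_num
  have h2 : Real.sqrt (2 * Real.pi) = 2 * Real.sqrt (Real.pi / 2) := by
    rw [show 2 * Real.pi = 2 ^ 2 * (Real.pi / 2) by ring,
      Real.sqrt_mul (by positivity), Real.sqrt_sq (by norm_num : (0:ℝ) ≤ 2)]
  have hsq : 2 * Real.sqrt (Real.pi / 2) * stdGaussianPDF 0 = 1 := by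
    rw [h0, h2]
    exact mul_inv_cancel₀ (by positivity)
  have hmono : MonotoneOn F (Ici (0:ℝ)) := by
    apply monotoneOn_of_deriv_nonneg (convex_Ici 0)
    · exact fun u _ => ((hFd u).continuousAt).continuousWithinAt
    · intro u _
      exact ((hFd u).differentiableAt).differentiableWithinAt
    · intro u hu
      rw [interior_Ici] at hu
      rw [(hFd u).deriv]
      have hGu := hGle u hu.le
      have hp := stdGaussianPDF_pos u
      have hkey : 2 * Real.sqrt (Real.pi / 2) * G u ≤ u := by
        have := mul_le_mul_of_nonneg_left hGu
          (le_of_lt (by positivity : (0:ℝ) < 2 * Real.sqrt (Real.pi / 2)))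
        rw [show 2 * Real.sqrt (Real.pi / 2) * (u * stdGaussianPDF 0)
          = 2 * Real.sqrt (Real.pi / 2) * stdGaussianPDF 0 * u by ring, hsq, one_mul] at this
        exact this
      simp only [pow_one]
      nlinarith [hkey, hp]
  have hF0 : F 0 = 0 := by
    simp [hF, hG]
  have := hmono (Set.self_mem_Ici) (Set.mem_Ici.2 hy) hy
  rw [hF0] at this
  simp only [hF] at this
  linarith

/-- for `x ∈ [0, 1/2)` and `Φ(y) = 1/2 + x`, one has
`φ(0) − φ(y) ≥ √(π/2) x²`. -/
theorem phi_zero_sub_phi_ge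
    (x y : ℝ) (hx0 : 0 ≤ x) (hx1 : x < 1 / 2)
    (hy : stdGaussianCDF y = 1 / 2 + x) :
    stdGaussianPDF 0 - stdGaussianPDF y ≥ Real.sqrt (Real.pi / 2) * x ^ 2 := by
  have hx : x = ∫ t in (0:ℝ)..y, stdGaussianPDF t := by
    have := stdGaussianCDF_sub y
    rw [hy, stdGaussianCDF_zero] at this
    linarith
  rcases le_or_gt 0 y with h | h
  · rw [hx]
    exact key_ineq y h
  · -- y < 0 forces x ≤ 0, hence x = 0
    have hxle : x ≤ 0 := by
      rw [hx, intervalIntegral.integral_symm]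
      have : 0 ≤ ∫ t in y..(0:ℝ), stdGaussianPDF t :=
        intervalIntegral.integral_nonneg h.le (fun t _ => (stdGaussianPDF_pos t).le)
      linarith
    have hx0' : x = 0 := le_antisymm hxle hx0
    rw [hx0']
    have := stdGaussianPDF_le y
    norm_num
    linarith
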